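/- arXiv:2006.10180 — 2 statements merged into one kernel-verified Lean document; each statement's English description precedes it below -/
import Mathlib

section
/- The monadic Gödel algebra A = ⟨[0,1]^ℕ, ∃, ∀⟩, where the Gödel algebra structure on [0,1]^ℕ is pointwise from the standard Gödel algebra on [0,1] and ∃A is the set of constant sequences, is not locally finite: the subalgebra generated by the single element a(n) = 1 − 1/n is infinite. -/
open unitInterval

instance : Fact ((0:ℝ) ≤ 1) := ⟨zero_le_one⟩

/-- Gödel implication on the standard Gödel algebra `[0,1]`. -/
noncomputable def gimp (x y : I) : I := if x ≤ y then 1 else y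

/-- `∀` on `[0,1]^ℕ`: the constant sequence with value `inf_n x(n)`. -/
noncomputable def qU (x : ℕ → I) : ℕ → I := fun _ => ⨅ n, x n

/-- `∃` on `[0,1]^ℕ`: the constant sequence with value `sup_n x(n)`. -/
noncomputable def qE (x : ℕ → I) : ℕ → I := fun _ => ⨆ n, x n

/-- The generator `a(n) = 1 - 1/n` (indexed so that `a(n) = 1 - 1/(n+1)`). -/
noncomputable def gen : ℕ → I := fun n =>
  ⟨1 - 1 / (n + 1), by
    have h0 : (0:ℝ) < n + 1 := by positivity
    have h1 : (0:ℝ) < 1 / (n + 1) := by positivity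
    have h2 : 1 / ((n:ℝ) + 1) ≤ 1 := by rw [div_le_one h0]; linarith
    constructor <;> linarith⟩

/-- The subuniverse of the monadic Gödel algebra `⟨[0,1]^ℕ, ∃, ∀⟩`
generated by the single element `gen`. -/
inductive Gen : (ℕ → I) → Prop
  | base : Gen gen
  | bot : Gen fun _ => 0
  | top : Gen fun _ => 1
  | inf {f g} : Gen f → Gen g → Gen (f ⊓ g)
  | sup {f g} : Gen f → Gen g → Gen (f ⊔ g)
  | himp {f g} : Gen f → Gen g → Gen fun n => gimp (f n) (g n)
  | all {f} : Gen f → Gen (qU f)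
  | ex {f} : Gen f → Gen (qE f)

lemma gen_lt_one (k : ℕ) : gen k < 1 := by
  rw [← Subtype.coe_lt_coe]
  show 1 - 1 / ((k:ℝ) + 1) < 1
  have h0 : (0:ℝ) < k + 1 := by positivity
  have h1 : (0:ℝ) < 1 / (k + 1) := by positivity
  linarith

lemma gen_mono : Monotone gen := by
  intro k n hkn
  rw [← Subtype.coe_le_coe]
  show 1 - 1 / ((k:ℝ) + 1) ≤ 1 - 1 / ((n:ℝ) + 1)
  have h0 : (0:ℝ) < k + 1 := by positivity
  have h1 : ((k:ℝ) + 1) ≤ ((n:ℝ) + 1) := by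
    have := (Nat.cast_le (α := ℝ)).2 hkn; linarith
  have := one_div_le_one_div_of_le h0 h1
  linarith

lemma gen_strictMono : StrictMono gen := by
  intro k n hkn
  rw [← Subtype.coe_lt_coe]
  show 1 - 1 / ((k:ℝ) + 1) < 1 - 1 / ((n:ℝ) + 1)
  have h0 : (0:ℝ) < k + 1 := by positivity
  have h1 : ((k:ℝ) + 1) < ((n:ℝ) + 1) := by
    have := (Nat.cast_lt (α := ℝ)).2 hkn; linarith
  have := one_div_lt_one_div_of_lt h0 h1
  linarith

/-- The iterated sequence: `b k n = 1` for `n < k`, `gen n` otherwise. -/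
noncomputable def b (k : ℕ) : ℕ → I := fun n => if n < k then 1 else gen n

lemma qU_b (k : ℕ) : qU (b k) = fun _ => gen k := by
  funext m
  show (⨅ n, b k n) = gen k
  apply le_antisymm
  · have : b k k = gen k := by simp [b]
    calc (⨅ n, b k n) ≤ b k k := iInf_le _ k
      _ = gen k := this
  · apply le_iInf
    intro n
    by_cases h : n < k
    · simp only [b, if_pos h]; exact le_one'
    · simp only [b, h, if_false]
      exact gen_mono (le_of_not_gt h)

lemma gen_b (k : ℕ) : Gen (b k) := by
  induction k with
  | zero =>
    have : b 0 = gen := by funext n; simp [b]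
    rw [this]; exact Gen.base
  | succ k ih =>
    have key : b (k + 1) = b k ⊔ fun n => gimp (b k n) (qU (b k) n) := by
      funext n
      rw [Pi.sup_apply, qU_b]
      rcases lt_trichotomy n k with h | h | h
      · have h1 : n < k + 1 := by omega
        have hb : b k n = 1 := by simp [b, h]
        have : ¬ (b k n ≤ gen k) := by
          rw [hb]; exact not_le_of_gt (gen_lt_one k)
        simp only [b, if_pos h1, if_pos h, gimp, if_neg (not_le_of_gt (gen_lt_one k))]
        exact (sup_eq_left.2 le_one').symm
      · subst h
        simp only [b, if_pos (Nat.lt_succ_self n), if_neg (lt_irrefl n), gimp,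
          if_pos (le_refl (gen n))]
        exact (sup_eq_right.2 le_one').symm
      · have h1 : ¬ n < k + 1 := by omega
        have h2 : ¬ n < k := by omega
        have hb : b k n = gen n := by simp [b, h2]
        have : ¬ (b k n ≤ gen k) := by
          rw [hb]; exact not_le_of_gt (gen_strictMono h)
        simp only [b, if_neg h1, if_neg h2, gimp,
          if_neg (not_le_of_gt (gen_strictMono h))]
        exact (sup_eq_left.2 (gen_mono h.le)).symm
    rw [key]
    exact Gen.sup ih (Gen.himp ih (Gen.all ih))

lemma b_injective : Function.Injective b := by
  intro j k hjk
  by_contra hne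
  wlog h : j < k generalizing j k
  · exact this hjk.symm (Ne.symm hne) (by omega)
  · have h1 : b j j = gen j := by simp [b]
    have h2 : b k j = 1 := by simp [b, h]
    rw [hjk, h2] at h1
    exact absurd h1.symm (ne_of_lt (gen_lt_one j))

/-- The subalgebra of `⟨[0,1]^ℕ, ∃, ∀⟩` generated by `gen` is infinite, so this
monadic Gödel algebra is not locally finite. -/
theorem gen_subalgebra_infinite : {f : ℕ → I | Gen f}.Infinite :=
  Set.infinite_of_injective_forall_mem (f := b) b_injective gen_b
end

section
/- Let L be a bounded distributive lattice with an interior operator ∀ (satisfying ∀1 = 1, ∀a ≤ a, ∀∀a = ∀a, ∀(a ∧ b) = ∀a ∧ ∀b) that additionally satisfies ∀(∀a ∨ b) = ∀a ∨ ∀b for all a, b. Then for any prime filters P, Q of L with P ∩ ∀L ⊆ Q ∩ ∀L, there exists a prime filter R of L such that R ⊆ Q and R ∩ ∀L = P ∩ ∀L. -/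
def IsPrimeFilter {L : Type*} [DistribLattice L] [BoundedOrder L] (P : Set L) : Prop :=
  P.Nonempty ∧ P ≠ Set.univ ∧ (∀ x ∈ P, ∀ y : L, x ≤ y → y ∈ P) ∧
    (∀ x ∈ P, ∀ y ∈ P, x ⊓ y ∈ P) ∧ (∀ x y : L, x ⊔ y ∈ P → x ∈ P ∨ y ∈ P)

theorem exists_primeFilter_same_trace {L : Type*} [DistribLattice L] [BoundedOrder L]
    (U : L → L)
    (hU1 : U ⊤ = ⊤) (hUle : ∀ a : L, U a ≤ a) (hUU : ∀ a : L, U (U a) = U a)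
    (hUinf : ∀ a b : L, U (a ⊓ b) = U a ⊓ U b)
    (hUsup : ∀ a b : L, U (U a ⊔ b) = U a ⊔ U b)
    (P Q : Set L) (hP : IsPrimeFilter P) (hQ : IsPrimeFilter Q)
    (hPQ : P ∩ Set.range U ⊆ Q ∩ Set.range U) :
    ∃ R : Set L, IsPrimeFilter R ∧ R ⊆ Q ∧ R ∩ Set.range U = P ∩ Set.range U := by
  obtain ⟨hPne, hPuniv, hPup, hPinf, hPprime⟩ := hP
  obtain ⟨hQne, hQuniv, hQup, hQinf, hQprime⟩ := hQ
  -- U is monotone, and fixes its range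
  have hUmono : ∀ a b : L, a ≤ b → U a ≤ U b := by
    intro a b hab
    have : U (a ⊓ b) = U a := by rw [inf_eq_left.2 hab]
    rw [hUinf] at this
    exact le_of_eq_of_le this.symm inf_le_right
  have hfix : ∀ a : L, a ∈ Set.range U → U a = a := by
    rintro a ⟨b, rfl⟩; exact hUU b
  -- ⊤ ∈ P, ⊤ ∈ Q, ⊥ ∉ P, ⊥ ∉ Q
  have htopP : (⊤ : L) ∈ P := by
    obtain ⟨x, hx⟩ := hPne; exact hPup x hx ⊤ le_top
  have hbotP : (⊥ : L) ∉ P := by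
    intro h
    exact hPuniv (Set.eq_univ_of_forall fun x => hPup ⊥ h x bot_le)
  have hbotQ : (⊥ : L) ∉ Q := by
    intro h
    exact hQuniv (Set.eq_univ_of_forall fun x => hQup ⊥ h x bot_le)
  -- The filter F generated by P ∩ range U
  set Fs : Set L := {x | ∃ a ∈ P ∩ Set.range U, a ≤ x} with hFs
  have hFsPF : Order.IsPFilter Fs := by
    apply Order.IsPFilter.of_def
    · exact ⟨⊤, ⊤, ⟨htopP, ⟨⊤, hU1⟩⟩, le_rfl⟩
    · rintro x ⟨a, ha, hax⟩ y ⟨b, hb, hby⟩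
      refine ⟨x ⊓ y, ⟨a ⊓ b, ⟨hPinf a ha.1 b hb.1, ?_⟩, le_inf (le_trans inf_le_left hax) (le_trans inf_le_right hby)⟩, inf_le_left, inf_le_right⟩
      refine ⟨a ⊓ b, ?_⟩
      rw [hUinf, hfix a ha.2, hfix b hb.2]
    · rintro x y hxy ⟨a, ha, hax⟩
      exact ⟨a, ha, le_trans hax hxy⟩
  set F := hFsPF.toPFilter with hF
  -- The ideal I generated by (L \ Q) ∪ (range U \ P)
  set Is : Set L := {x | ∃ c d : L, c ∉ Q ∧ d ∈ Set.range U ∧ d ∉ P ∧ x ≤ c ⊔ d} with hIs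
  have hbotU : (⊥ : L) ∈ Set.range U := ⟨⊥, le_antisymm (hUle ⊥) bot_le⟩
  have hIsIdeal : Order.IsIdeal Is := by
    constructor
    · rintro x y hxy ⟨c, d, hc, hd, hdp, hx⟩
      exact ⟨c, d, hc, hd, hdp, le_trans hxy hx⟩
    · exact ⟨⊥, ⊥, ⊥, hbotQ, hbotU, hbotP, bot_le⟩
    · rintro x ⟨c, d, hc, hd, hdp, hx⟩ y ⟨c', d', hc', hd', hdp', hy⟩
      refine ⟨x ⊔ y, ⟨c ⊔ c', d ⊔ d', ?_, ?_, ?_, ?_⟩, le_sup_left, le_sup_right⟩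
      · intro h
        rcases hQprime c c' h with h' | h' <;> [exact hc h'; exact hc' h']
      · refine ⟨d ⊔ d', ?_⟩
        conv_lhs => rw [← hfix d hd]
        rw [hUsup, hfix d hd, hfix d' hd']
      · intro h
        rcases hPprime d d' h with h' | h' <;> [exact hdp h'; exact hdp' h']
      · calc x ⊔ y ≤ (c ⊔ d) ⊔ (c' ⊔ d') := sup_le_sup hx hy
          _ = (c ⊔ c') ⊔ (d ⊔ d') := sup_sup_sup_comm c d c' d'
  set I := hIsIdeal.toIdeal with hI
  -- F and I are disjoint
  have hdisj : Disjoint (F : Set L) (I : Set L) := by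
    rw [Set.disjoint_left]
    rintro x ⟨a, ⟨haP, haU⟩, hax⟩ ⟨c, d, hc, hd, hdp, hx⟩
    have hacd : a ≤ c ⊔ d := le_trans hax hx
    have : U a ≤ U (c ⊔ d) := hUmono _ _ hacd
    rw [hfix a haU] at this
    have hcd : U (c ⊔ d) = U c ⊔ d := by
      rw [sup_comm, ← hfix d hd, hUsup, hfix d hd, sup_comm]
    rw [hcd] at this
    have hmem : U c ⊔ d ∈ P := hPup a haP _ this
    rcases hPprime (U c) d hmem with h' | h'
    · have : U c ∈ Q ∩ Set.range U := hPQ ⟨h', ⟨c, rfl⟩⟩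
      exact hc (hQup (U c) this.1 c (hUle c))
    · exact hdp h'
  -- apply the prime separation theorem
  obtain ⟨J, hJprime, hIJ, hJdisj⟩ :=
    DistribLattice.prime_ideal_of_disjoint_filter_ideal hdisj
  refine ⟨(J : Set L)ᶜ, ⟨?_, ?_, ?_, ?_, ?_⟩, ?_, ?_⟩
  · -- nonempty: ⊤ ∉ J since ⊤ ∈ F
    have htopF : (⊤ : L) ∈ (F : Set L) := ⟨⊤, ⟨htopP, ⟨⊤, hU1⟩⟩, le_rfl⟩
    exact ⟨⊤, fun h => Set.disjoint_left.1 hJdisj htopF h⟩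
  · -- proper: ⊥ ∈ J
    intro h
    have : (⊥ : L) ∈ (J : Set L) := J.bot_mem
    have : (⊥ : L) ∈ ((J : Set L)ᶜ : Set L) := h ▸ Set.mem_univ ⊥
    exact this ‹(⊥ : L) ∈ (J : Set L)›
  · -- upward closed
    intro x hx y hxy h
    exact hx (J.lower hxy h)
  · -- inf closed: from primality of J
    intro x hx y hy h
    rcases hJprime.mem_or_mem h with h' | h' <;> [exact hx h'; exact hy h']
  · -- prime: from J closed under sup
    intro x y h
    by_contra hcon
    push_neg at hcon
    obtain ⟨h1, h2⟩ := hcon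
    simp only [Set.mem_compl_iff, not_not] at h1 h2
    exact h (J.sup_mem h1 h2)
  · -- R ⊆ Q
    intro x hx
    by_contra hxQ
    have : x ∈ Is := ⟨x, ⊥, hxQ, hbotU, hbotP, le_sup_left⟩
    exact hx (hIJ this)
  · -- trace equality
    ext a
    constructor
    · rintro ⟨haR, haU⟩
      refine ⟨?_, haU⟩
      by_contra haP
      have : a ∈ Is := ⟨⊥, a, hbotQ, haU, haP, le_sup_right⟩
      exact haR (hIJ this)
    · rintro ⟨haP, haU⟩
      refine ⟨?_, haU⟩
      intro hJ
      have haF : a ∈ (F : Set L) := ⟨a, ⟨haP, haU⟩, le_rfl⟩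
      exact Set.disjoint_left.1 hJdisj haF hJ
end
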